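/- For any tree T and any integer t ≥ 3, if G and G' are two n-vertex graphs, each of girth greater than |V(T)| and each having at least n-1 vertices of degree t-1 with the remaining vertex (if any) of degree t-1 or t-2, then the number of copies of T in G equals the number of copies of T in G'. -/

import Mathlib

open SimpleGraph Finset

/-- `G` contains a copy of `F`. -/
def Graph.Contains {α β : Type*} (F : SimpleGraph α) (G : SimpleGraph β) : Prop :=
  ∃ f : α ↪ β, ∀ ⦃a b : α⦄, F.Adj a b → G.Adj (f a) (f b)

/-- The number of subgraphs of `G` isomorphic to `H`, i.e. `N(H, G)`. -/
noncomputable def Graph.copyCount {α β : Type*} (H : SimpleGraph α) (G : SimpleGraph β) : ℕ :=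
  Set.ncard {G' : G.Subgraph | Nonempty (H ≃g G'.coe)}

/-- The join `G + G'` of two graphs. -/
def Graph.join {α β : Type*} (G : SimpleGraph α) (H : SimpleGraph β) :
    SimpleGraph (α ⊕ β) where
  Adj x y :=
    match x, y with
    | Sum.inl a, Sum.inl b => G.Adj a b
    | Sum.inr a, Sum.inr b => H.Adj a b
    | Sum.inl _, Sum.inr _ => True
    | Sum.inr _, Sum.inl _ => True
  symm := ⟨by rintro (a | a) (b | b) h <;> simp_all <;> exact h.symm⟩
  loopless := ⟨by rintro (a | a) h <;> simp_all⟩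

/-- `s` is the minimum size of a color class over proper `(r+1)`-colorings of `F` (σ(F) = s). -/
def Graph.IsSigma {α : Type*} (F : SimpleGraph α) (r s : ℕ) : Prop :=
  IsLeast {k : ℕ | ∃ (C : F.Coloring (Fin (r + 1))) (i : Fin (r + 1)),
    k = {v | C v = i}.ncard} s

/-!
Count labelled copies, i.e. injective homomorphisms `T → G`, instead of subgraphs: the two
counts differ by the factor `|Aut T|`. Labelled copies of `T` are built leaf by leaf. If `g`
embeds `T - u`, where the leaf `u` hangs at `p`, the extensions of `g` correspond to the
neighbours of `g p` outside the image of `g`. Since the girth of `G` exceeds `|T|`, every copy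
of a tree is induced, so exactly `deg_{T-u} p` neighbours of `g p` lie in that image, and the
number of extensions depends only on the degree of `g p`. That degree is `t - 1` except at the
(at most one) defective vertex `w`; tracking, together with the total, the number of copies
sending a given vertex of the tree to `w` yields an induction in which every count agrees for
`G` and `G'`. Degree parity shows that `G` has a defective vertex iff `G'` does.
-/

lemma Nat.card_subtype_add_card_subtype_not {γ : Type*} [Finite γ] (P : γ → Prop) :
    Nat.card {x // P x} + Nat.card {x // ¬ P x} = Nat.card γ := by
  classical
  rw [← Nat.card_sum, Nat.card_congr (Equiv.sumCompl P)]

namespace SimpleGraph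

lemma ncard_neighborSet_eq_degree {V : Type*} (G : SimpleGraph V) (v : V)
    [Fintype (G.neighborSet v)] : (G.neighborSet v).ncard = G.degree v := by
  rw [← Nat.card_coe_set_eq, Nat.card_eq_fintype_card, card_neighborSet_eq_degree]

instance {α W : Type*} [Finite α] [Finite W] {A : SimpleGraph α} {B : SimpleGraph W} :
    Finite (A ≃g B) :=
  .of_injective _ RelIso.toEquiv_injective

lemma IsTree.exists_leaf_ne {β : Type*} {T : SimpleGraph β} [Finite β] [Nontrivial β]
    (hT : T.IsTree) (x : β) :
    ∃ u, u ≠ x ∧ ∃ p : ({u}ᶜ : Set β), T.Adj u p ∧ (∀ q, T.Adj u q → q = p) ∧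
      (T.induce {u}ᶜ).IsTree := by
  classical
  have := Fintype.ofFinite β
  have hleaf : ∀ u, T.degree u = 1 → ∃ p : ({u}ᶜ : Set β), T.Adj u p ∧
      (∀ q, T.Adj u q → q = p) ∧ (T.induce {u}ᶜ).IsTree := fun u hu => by
    obtain ⟨p, hup, huniq⟩ := degree_eq_one_iff_existsUnique_adj.mp hu
    exact ⟨⟨p, hup.ne'⟩, hup, huniq,
      ⟨hT.connected.induce_compl_singleton_of_degree_eq_one hu, hT.isAcyclic.induce _⟩⟩
  obtain ⟨v, w, hvw, hv, hw⟩ := hT.exists_ne_and_degree_eq_one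
  by_cases hvx : v = x
  · exact ⟨w, hvx ▸ hvw.symm, hleaf w hw⟩
  · exact ⟨v, hvx, hleaf v hv⟩

namespace Copy

section

variable {α W : Type*} {A : SimpleGraph α} {B : SimpleGraph W}

instance [Finite α] [Finite W] : Finite (Copy A B) :=
  .of_injective _ DFunLike.coe_injective

lemma toSubgraph_adj_apply_iff (f : Copy A B) {a b : α} :
    f.toSubgraph.Adj (f a) (f b) ↔ A.Adj a b := by
  simp only [Subgraph.map_adj, Relation.Map, Subgraph.top_adj]
  exact ⟨fun ⟨a', b', h, ha, hb⟩ => f.injective ha ▸ f.injective hb ▸ h,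
    fun h => ⟨a, b, h, rfl, rfl⟩⟩

lemma toSubgraph_comp_iso (f : Copy A B) (φ : A ≃g A) :
    (f.comp φ.toCopy).toSubgraph = f.toSubgraph := by
  conv_rhs => rw [toSubgraph, ← Subgraph.map_iso_top φ, ← Subgraph.map_comp]
  rfl

lemma exists_iso_of_toSubgraph_eq {f g : Copy A B} (h : f.toSubgraph = g.toSubgraph) :
    ∃ φ : A ≃g A, f = g.comp φ.toCopy := by
  have hrange : Set.range f = Set.range g := by
    simpa using congrArg Subgraph.verts h
  let e : α ≃ α := (Equiv.ofInjective f f.injective).trans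
    ((Equiv.setCongr hrange).trans (Equiv.ofInjective g g.injective).symm)
  have he : ∀ a, g (e a) = f a := fun a => Equiv.apply_ofInjective_symm g.injective _
  refine ⟨⟨e, fun {a b} => ?_⟩, ext fun a => (he a).symm⟩
  rw [← g.toSubgraph_adj_apply_iff, ← f.toSubgraph_adj_apply_iff, he, he, h]

lemma card_toSubgraph_fiber (f : Copy A B) :
    Nat.card {g : Copy A B // g.toSubgraph = f.toSubgraph} = Nat.card (A ≃g A) := by
  refine (Nat.card_congr (Equiv.ofBijective
    (fun φ => ⟨f.comp φ.toCopy, f.toSubgraph_comp_iso φ⟩) ⟨fun φ ψ h => ?_, ?_⟩)).symm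
  · exact RelIso.ext fun a => f.injective (DFunLike.congr_fun (congrArg Subtype.val h) a)
  · rintro ⟨g, hg⟩
    obtain ⟨φ, rfl⟩ := exists_iso_of_toSubgraph_eq hg
    exact ⟨φ, rfl⟩

def equivOfSubsingleton [Subsingleton α] (a : α) : Copy A B ≃ W where
  toFun f := f a
  invFun w := ⟨⟨fun _ => w, fun h => (h.ne (Subsingleton.elim _ _)).elim⟩,
    fun _ _ _ => Subsingleton.elim _ _⟩
  left_inv f := ext fun b => by rw [Subsingleton.elim b a]; rfl
  right_inv _ := rfl

lemma card_of_subsingleton [Subsingleton α] [Nonempty α] : Nat.card (Copy A B) = Nat.card W :=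
  Nat.card_congr (equivOfSubsingleton (Classical.arbitrary α))

lemma card_apply_mem_of_subsingleton [Subsingleton α] (a : α) (E : Finset W) :
    Nat.card {f : Copy A B // f a ∈ E} = #E :=
  (Nat.card_congr ((equivOfSubsingleton a).subtypeEquiv fun _ => Iff.rfl)).trans
    (Nat.card_eq_finsetCard E)

-- A non-edge of `A` sent to an edge of `B` would close the image of an `A`-path into a cycle
-- of length at most `|α|`.
lemma adj_iff_of_lt_egirth (f : Copy A B) (hA : A.Preconnected) (hB : ENat.card α < B.egirth)
    {a b : α} : B.Adj (f a) (f b) ↔ A.Adj a b := by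
  refine ⟨fun hadj => ?_, fun h => f.toHom.map_adj h⟩
  by_contra hab
  have : Finite α := ENat.card_lt_top.mp (hB.trans_le le_top)
  have := Fintype.ofFinite α
  obtain ⟨p, hp⟩ := (hA b a).exists_isPath
  have hcycle : (Walk.cons hadj (p.map f.toHom)).IsCycle := by
    refine (Walk.cons_isCycle_iff _ hadj).mpr ⟨hp.map f.injective, fun he => hab ?_⟩
    rw [Walk.edges_map, List.mem_map] at he
    obtain ⟨e, he, hfe⟩ := he
    have : e = s(a, b) := Sym2.map.injective f.injective (by simpa using hfe)
    exact p.adj_of_mem_edges (this ▸ he)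
  rw [ENat.card_eq_coe_fintype_card] at hB
  refine hB.not_ge ((egirth_le_length hcycle).trans ?_)
  rw [Walk.length_cons, Walk.length_map]
  exact_mod_cast hp.length_lt

lemma ncard_neighborSet_diff_range [Fintype W] [DecidableRel B.Adj] (f : Copy A B)
    (hA : A.Preconnected) (hB : ENat.card α < B.egirth) (a : α) :
    (B.neighborSet (f a) \ Set.range f).ncard = B.degree (f a) - (A.neighborSet a).ncard := by
  have hinter : Set.range f ∩ B.neighborSet (f a) = f '' A.neighborSet a := by
    ext v
    constructor
    · rintro ⟨⟨b, rfl⟩, hv⟩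
      exact ⟨b, (f.adj_iff_of_lt_egirth hA hB).mp hv, rfl⟩
    · rintro ⟨b, hb, rfl⟩
      exact ⟨⟨b, rfl⟩, f.toHom.map_adj hb⟩
  rw [← Set.sdiff_inter_self_eq_sdiff, Set.ncard_sdiff Set.inter_subset_right, hinter,
    Set.ncard_image_of_injective (f := f) _ f.injective, ncard_neighborSet_eq_degree]

end

section Leaf

variable {β V : Type*} [DecidableEq β] {T : SimpleGraph β} {G : SimpleGraph V} {u : β}
  {p : ({u}ᶜ : Set β)}

def extendLeaf (hup : T.Adj u p) (huniq : ∀ q, T.Adj u q → q = p)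
    (g : Copy (T.induce {u}ᶜ) G) (a : V) (hpa : G.Adj (g p) a) (ha : a ∉ Set.range g) :
    Copy T G where
  toHom.toFun b := if h : b = u then a else g ⟨b, h⟩
  toHom.map_rel' {b c} hbc := by
    by_cases hb : b = u <;> by_cases hc : c = u
    · exact absurd (hb.trans hc.symm) hbc.ne
    · subst hb
      obtain rfl : c = p := huniq c hbc
      simpa [hc] using hpa.symm
    · subst hc
      obtain rfl : b = p := huniq b hbc.symm
      simpa [hb] using hpa
    · have : (T.induce {u}ᶜ).Adj ⟨b, hb⟩ ⟨c, hc⟩ := hbc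
      simpa [hb, hc] using g.toHom.map_adj this
  injective' b c hbc := by
    by_cases hb : b = u <;> by_cases hc : c = u
    · exact hb.trans hc.symm
    · simp only [hb, hc, dite_true, dite_false, RelHom.coeFn_mk] at hbc
      exact absurd ⟨_, hbc.symm⟩ ha
    · simp only [hb, hc, dite_true, dite_false, RelHom.coeFn_mk] at hbc
      exact absurd ⟨_, hbc⟩ ha
    · exact congrArg Subtype.val (g.injective (by simpa [hb, hc] using hbc))

@[simp] lemma extendLeaf_apply_of_ne (hup : T.Adj u p) (huniq : ∀ q, T.Adj u q → q = p)
    (g : Copy (T.induce {u}ᶜ) G) (a : V) (hpa : G.Adj (g p) a) (ha : a ∉ Set.range g)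
    (b : ({u}ᶜ : Set β)) :
    extendLeaf hup huniq g a hpa ha b = g b :=
  dif_neg b.2

@[simp] lemma extendLeaf_apply_self (hup : T.Adj u p) (huniq : ∀ q, T.Adj u q → q = p)
    (g : Copy (T.induce {u}ᶜ) G) (a : V) (hpa : G.Adj (g p) a) (ha : a ∉ Set.range g) :
    extendLeaf hup huniq g a hpa ha u = a :=
  dif_pos rfl

def equivSigmaOfLeaf (hup : T.Adj u p) (huniq : ∀ q, T.Adj u q → q = p) :
    Copy T G ≃ Σ g : Copy (T.induce {u}ᶜ) G, ↥(G.neighborSet (g p) \ Set.range g) where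
  toFun f := ⟨f.comp (Copy.induce T {u}ᶜ), f u, (f.toHom.map_adj hup).symm,
    fun ⟨b, hb⟩ => b.2 (f.injective hb)⟩
  invFun x := extendLeaf hup huniq x.1 x.2.1 x.2.2.1 x.2.2.2
  left_inv f := by
    ext b
    by_cases hb : b = u
    · subst hb; exact extendLeaf_apply_self ..
    · exact extendLeaf_apply_of_ne (b := ⟨b, hb⟩) ..
  right_inv x := Sigma.subtype_ext
    (ext fun b => extendLeaf_apply_of_ne hup huniq x.1 _ x.2.2.1 x.2.2.2 b)
    (extendLeaf_apply_self hup huniq x.1 _ x.2.2.1 x.2.2.2)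

lemma card_restrict_of_leaf [Finite β] [Fintype V] [DecidableRel G.Adj]
    (hup : T.Adj u p) (huniq : ∀ q, T.Adj u q → q = p) (hT : (T.induce {u}ᶜ).Preconnected)
    (hG : ENat.card ({u}ᶜ : Set β) < G.egirth) (R : Copy (T.induce {u}ᶜ) G → Prop) {d : ℕ}
    (hR : ∀ g, R g → G.degree (g p) = d) :
    Nat.card {f : Copy T G // R (f.comp (Copy.induce T {u}ᶜ))} =
      Nat.card {g // R g} * (d - ((T.induce {u}ᶜ).neighborSet p).ncard) := by
  classical
  have := Fintype.ofFinite {g // R g}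
  calc Nat.card {f : Copy T G // R (f.comp (Copy.induce T {u}ᶜ))}
      = Nat.card (Σ g : {g // R g}, ↥(G.neighborSet (g.1 p) \ Set.range g.1)) :=
        Nat.card_congr (((equivSigmaOfLeaf hup huniq).subtypeEquiv (q := fun x => R x.1)
          fun _ => Iff.rfl).trans (Equiv.subtypeSigmaEquiv _ R))
    _ = ∑ _g : {g // R g}, (d - ((T.induce {u}ᶜ).neighborSet p).ncard) := by
        rw [Nat.card_sigma]
        refine sum_congr rfl fun g _ => ?_
        rw [Nat.card_coe_set_eq, ncard_neighborSet_diff_range _ hT hG, hR g g.2]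
    _ = _ := by rw [sum_const, card_univ, smul_eq_mul, Nat.card_eq_fintype_card]

end Leaf

end Copy

theorem card_copy_eq_copyCount_mul_card_iso {α W : Type*} {A : SimpleGraph α}
    {B : SimpleGraph W} [Finite α] [Fintype W] :
    Nat.card (Copy A B) = B.copyCount A * Nat.card (A ≃g A) := by
  classical
  have := Fintype.ofFinite {f : A →g B // Function.Injective f}
  rw [copyCount_eq_card_image_copyToSubgraph, Nat.card_eq_fintype_card, ← card_univ,
    card_eq_sum_card_image Copy.toSubgraph, ← smul_eq_mul, ← sum_const]
  refine sum_congr rfl fun S hS => ?_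
  obtain ⟨f, -, rfl⟩ := mem_image.mp hS
  rw [← f.card_toSubgraph_fiber, Nat.card_eq_fintype_card, Fintype.card_subtype]

section NearlyRegular

variable {V : Type*} [Fintype V] [DecidableEq V] {G : SimpleGraph V} [DecidableRel G.Adj]
  {k : ℕ} {D : Finset V}

-- Written additively: `G.degree v = k - 1` for `v ∈ D` would, for `k = 0`, let `D` contain
-- vertices of degree `0 = k`.
def IsNearlyRegular (G : SimpleGraph V) [DecidableRel G.Adj] (k : ℕ) (D : Finset V) : Prop :=
  ∀ v, G.degree v + (if v ∈ D then 1 else 0) = k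

lemma isNearlyRegular_of_degree {t : ℕ} (hd : ∀ v, G.degree v = t - 1 ∨ G.degree v = t - 2) :
    G.IsNearlyRegular (t - 1) {v | G.degree v ≠ t - 1} := fun v => by
  by_cases h : G.degree v = t - 1
  · simp [h]
  · have := (hd v).resolve_left h
    simp [h]
    omega

namespace IsNearlyRegular

lemma degree_eq_of_mem (hG : G.IsNearlyRegular k D) {v : V} (hv : v ∈ D) :
    G.degree v = k - 1 := by
  have := hG v
  simp only [hv, if_true] at this
  omega

lemma degree_eq_of_notMem (hG : G.IsNearlyRegular k D) {v : V} (hv : v ∉ D) :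
    G.degree v = k := by
  simpa [hv] using hG v

lemma sum_degrees_add_card (hG : G.IsNearlyRegular k D) :
    ∑ v, G.degree v + #D = Fintype.card V * k := by
  simpa [sum_add_distrib, sum_boole] using sum_congr (s₁ := univ) rfl fun v _ => hG v

lemma card_eq {V' : Type*} [Fintype V'] [DecidableEq V'] {G' : SimpleGraph V'}
    [DecidableRel G'.Adj] {D' : Finset V'} (hG : G.IsNearlyRegular k D)
    (hG' : G'.IsNearlyRegular k D') (hV : Fintype.card V = Fintype.card V') (hD : #D ≤ 1)
    (hD' : #D' ≤ 1) : #D = #D' := by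
  have h := hG.sum_degrees_add_card
  have h' := hG'.sum_degrees_add_card
  rw [sum_degrees_eq_twice_card_edges, hV] at h
  rw [sum_degrees_eq_twice_card_edges] at h'
  generalize Fintype.card V' * k = m at h h'
  omega

section Leaf

variable {β : Type*} [DecidableEq β] [Finite β] {T : SimpleGraph β} {u : β}
  {p : ({u}ᶜ : Set β)}

lemma card_copy_of_leaf (hG : G.IsNearlyRegular k D)
    (hup : T.Adj u p) (huniq : ∀ q, T.Adj u q → q = p) (hT : (T.induce {u}ᶜ).Preconnected)
    (hg : ENat.card ({u}ᶜ : Set β) < G.egirth) :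
    Nat.card (Copy T G) =
      Nat.card {g : Copy (T.induce {u}ᶜ) G // g p ∈ D} *
          (k - 1 - ((T.induce {u}ᶜ).neighborSet p).ncard) +
        Nat.card {g : Copy (T.induce {u}ᶜ) G // g p ∉ D} *
          (k - ((T.induce {u}ᶜ).neighborSet p).ncard) := by
  rw [← Copy.card_restrict_of_leaf hup huniq hT hg _ fun g => hG.degree_eq_of_mem,
    ← Copy.card_restrict_of_leaf hup huniq hT hg _ fun g => hG.degree_eq_of_notMem,
    Nat.card_subtype_add_card_subtype_not]

lemma card_copy_apply_mem_of_leaf (hG : G.IsNearlyRegular k D) (hD : #D ≤ 1)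
    (hup : T.Adj u p) (huniq : ∀ q, T.Adj u q → q = p) (hT : (T.induce {u}ᶜ).Preconnected)
    (hg : ENat.card ({u}ᶜ : Set β) < G.egirth) (x : ({u}ᶜ : Set β)) :
    Nat.card {f : Copy T G // f x ∈ D} =
      Nat.card {g : Copy (T.induce {u}ᶜ) G // g x ∈ D} *
        ((if p = x then k - 1 else k) - ((T.induce {u}ᶜ).neighborSet p).ncard) := by
  refine Copy.card_restrict_of_leaf hup huniq hT hg (fun g => g x ∈ D) fun g hgx => ?_
  split_ifs with hpx
  · exact hG.degree_eq_of_mem (hpx ▸ hgx)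
  · exact hG.degree_eq_of_notMem fun hgp =>
      hpx (g.injective (card_le_one.mp hD _ hgp _ hgx))

end Leaf

variable {V' : Type*} [Fintype V'] [DecidableEq V'] {G' : SimpleGraph V'} [DecidableRel G'.Adj]
  {D' : Finset V'}

theorem card_copy_eq_of_isTree {β : Type*} [Finite β] (T : SimpleGraph β) (hT : T.IsTree)
    (hG : G.IsNearlyRegular k D) (hG' : G'.IsNearlyRegular k D')
    (hV : Fintype.card V = Fintype.card V') (hD : #D = #D') (hD1 : #D ≤ 1)
    (hg : ENat.card β < G.egirth) (hg' : ENat.card β < G'.egirth) :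
    Nat.card (Copy T G) = Nat.card (Copy T G') ∧
      ∀ x, Nat.card {f : Copy T G // f x ∈ D} = Nat.card {f : Copy T G' // f x ∈ D'} := by
  induction β using Finite.induction_subsingleton_or_nontrivial with
  | hbase β =>
    have := hT.connected.nonempty
    refine ⟨?_, fun x => ?_⟩
    · rw [Copy.card_of_subsingleton, Copy.card_of_subsingleton, Nat.card_eq_fintype_card,
        Nat.card_eq_fintype_card, hV]
    · rw [Copy.card_apply_mem_of_subsingleton, Copy.card_apply_mem_of_subsingleton, hD]
  | hstep β ih =>
    classical
    have hgirth (u : β) : ENat.card ({u}ᶜ : Set β) < G.egirth :=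
      (ENat.card_le_card_of_injective Subtype.val_injective).trans_lt hg
    have hgirth' (u : β) : ENat.card ({u}ᶜ : Set β) < G'.egirth :=
      (ENat.card_le_card_of_injective Subtype.val_injective).trans_lt hg'
    have ih' (u : β) {T' : SimpleGraph ({u}ᶜ : Set β)} (hT' : T'.IsTree) :=
      ih _ (Finite.card_subtype_lt (x := u) (by simp)) T' hT' (hgirth u) (hgirth' u)
    refine ⟨?_, fun x => ?_⟩
    · obtain ⟨u, -, p, hup, huniq, hT'⟩ := hT.exists_leaf_ne (Classical.arbitrary β)
      obtain ⟨ihN, ihM⟩ := ih' u hT'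
      have hnot : Nat.card {g : Copy (T.induce {u}ᶜ) G // g p ∉ D} =
          Nat.card {g : Copy (T.induce {u}ᶜ) G' // g p ∉ D'} := by
        have := Nat.card_subtype_add_card_subtype_not fun g : Copy (T.induce {u}ᶜ) G => g p ∈ D
        have := Nat.card_subtype_add_card_subtype_not
          fun g : Copy (T.induce {u}ᶜ) G' => g p ∈ D'
        have := ihM p
        omega
      rw [hG.card_copy_of_leaf hup huniq hT'.connected.preconnected (hgirth u),
        hG'.card_copy_of_leaf hup huniq hT'.connected.preconnected (hgirth' u), ihM p, hnot]
    · obtain ⟨u, hux, p, hup, huniq, hT'⟩ := hT.exists_leaf_ne x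
      let x' : ({u}ᶜ : Set β) := ⟨x, hux.symm⟩
      rw [hG.card_copy_apply_mem_of_leaf hD1 hup huniq hT'.connected.preconnected (hgirth u) x',
        hG'.card_copy_apply_mem_of_leaf (hD ▸ hD1) hup huniq hT'.connected.preconnected
          (hgirth' u) x', (ih' u hT').2 x']

end IsNearlyRegular

end NearlyRegular

end SimpleGraph

lemma Graph.copyCount_eq_copyCount {α W : Type*} [Fintype W] (A : SimpleGraph α)
    (B : SimpleGraph W) : Graph.copyCount A B = B.copyCount A := by
  classical
  simp [Graph.copyCount, SimpleGraph.copyCount, Set.ncard_eq_toFinset_card']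

theorem stmt_12_general {β : Type*} [Fintype β] (T : SimpleGraph β) (hT : T.IsTree)
    (t : ℕ) (n : ℕ) (G G' : SimpleGraph (Fin n))
    (hg : (Fintype.card β : ℕ∞) < G.egirth)
    (hg' : (Fintype.card β : ℕ∞) < G'.egirth)
    (hd : ∀ v, (G.neighborSet v).ncard = t - 1 ∨ (G.neighborSet v).ncard = t - 2)
    (hd1 : {v : Fin n | (G.neighborSet v).ncard ≠ t - 1}.ncard ≤ 1)
    (hd' : ∀ v, (G'.neighborSet v).ncard = t - 1 ∨ (G'.neighborSet v).ncard = t - 2)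
    (hd1' : {v : Fin n | (G'.neighborSet v).ncard ≠ t - 1}.ncard ≤ 1) :
    Graph.copyCount T G = Graph.copyCount T G' := by
  classical
  simp only [ncard_neighborSet_eq_degree] at hd hd1 hd' hd1'
  simp only [Set.ncard_eq_toFinset_card', Set.toFinset_ofPred] at hd1 hd1'
  have hG := isNearlyRegular_of_degree hd
  have hG' := isNearlyRegular_of_degree hd'
  rw [← ENat.card_eq_coe_fintype_card] at hg hg'
  have hlabelled :=
    (hG.card_copy_eq_of_isTree T hT hG' rfl (hG.card_eq hG' rfl hd1 hd1') hd1 hg hg').1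
  rw [card_copy_eq_copyCount_mul_card_iso, card_copy_eq_copyCount_mul_card_iso] at hlabelled
  rw [Graph.copyCount_eq_copyCount, Graph.copyCount_eq_copyCount]
  exact Nat.eq_of_mul_eq_mul_right Nat.card_pos hlabelled

/-- for a tree `T` and `t ≥ 3`, any two `n`-vertex graphs of girth greater
than `|V(T)|` in which at least `n-1` vertices have degree `t-1` and any remaining vertex
has degree `t-1` or `t-2` contain the same number of copies of `T`. -/
theorem stmt_12 {β : Type*} [Fintype β] (T : SimpleGraph β) (hT : T.IsTree)
    (t : ℕ) (ht : 3 ≤ t) (n : ℕ) (G G' : SimpleGraph (Fin n))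
    (hg : (Fintype.card β : ℕ∞) < G.egirth)
    (hg' : (Fintype.card β : ℕ∞) < G'.egirth)
    (hd : ∀ v, (G.neighborSet v).ncard = t - 1 ∨ (G.neighborSet v).ncard = t - 2)
    (hd1 : {v : Fin n | (G.neighborSet v).ncard ≠ t - 1}.ncard ≤ 1)
    (hd' : ∀ v, (G'.neighborSet v).ncard = t - 1 ∨ (G'.neighborSet v).ncard = t - 2)
    (hd1' : {v : Fin n | (G'.neighborSet v).ncard ≠ t - 1}.ncard ≤ 1) :
    Graph.copyCount T G = Graph.copyCount T G' :=
  stmt_12_general T hT t n G G' hg hg' hd hd1 hd' hd1'
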